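/- The generalized Poisson distribution with parameters μ > 0 and 0 ≤ φ < 1, with pmf Pr(Y = y) = μ(μ + yφ)^{y−1} e^{−(μ + yφ)}/y!, has mean E(Y) = μ/(1−φ). -/

import Mathlib

open Finset Filter

namespace GP

/-- Abel coefficient: `A a 0 = 1`, `A a k = a * (a+k)^(k-1)` for `k ≥ 1`. -/
noncomputable def A (a : ℝ) (k : ℕ) : ℝ := if k = 0 then 1 else a * (a + k) ^ (k - 1)

lemma A_zero (a : ℝ) : A a 0 = 1 := rfl

lemma A_succ (a : ℝ) (k : ℕ) : A a (k + 1) = a * (a + (k + 1 : ℕ)) ^ k := by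
  simp [A]

lemma A_nonneg {a : ℝ} (ha : 0 ≤ a) (k : ℕ) : 0 ≤ A a k := by
  cases k with
  | zero => simp [A_zero]
  | succ k => rw [A_succ]; positivity

/-- `n`-th finite difference of a polynomial of degree `< n` vanishes. -/
lemma fd_vanish (n : ℕ) : ∀ d < n, ∀ a : ℝ, (fwdDiff (1:ℝ))^[n] (fun x => (a + x) ^ d) = 0 := by
  induction n with
  | zero => intro d hd; omega
  | succ n IH =>
    intro d hd a
    rw [Function.iterate_succ_apply]
    have hΔ : fwdDiff (1:ℝ) (fun x => (a + x) ^ d)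
        = ∑ j ∈ range d, (d.choose j : ℝ) • fun x : ℝ => (a + x) ^ j := by
      funext x
      have hbin : (a + x + 1) ^ d = ∑ j ∈ range (d + 1), (a + x) ^ j * (d.choose j : ℝ) := by
        simpa using add_pow (a + x) 1 d
      have hx : a + (x + 1) = a + x + 1 := by ring
      simp only [fwdDiff, hx, hbin, sum_range_succ, Nat.choose_self, Nat.cast_one, mul_one,
        add_sub_cancel_right, Finset.sum_apply, Pi.smul_apply, smul_eq_mul]
      exact Finset.sum_congr rfl fun j _ => mul_comm _ _
    rw [hΔ, fwdDiff_iter_finset_sum]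
    refine Finset.sum_eq_zero fun j hj => ?_
    have hj' : j < n := by have := mem_range.mp hj; omega
    rw [fwdDiff_iter_const_smul, IH j hj' a, smul_zero]

lemma alt_sum (n d : ℕ) (hd : d < n) (a : ℝ) :
    ∑ k ∈ range (n + 1), (-1 : ℝ) ^ (n - k) * (n.choose k : ℝ) * (a + k) ^ d = 0 := by
  have h := fwdDiff_iter_eq_sum_shift (1:ℝ) (fun x => (a + x) ^ d) n 0
  rw [fd_vanish n d hd a] at h
  simp only [Pi.zero_apply] at h
  rw [eq_comm] at h
  rw [← h]
  refine Finset.sum_congr rfl fun k _ => ?_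
  have : ((0 : ℝ) + k • (1:ℝ)) = (k : ℝ) := by simp
  rw [this]
  push_cast
  rw [zsmul_eq_mul]
  push_cast
  ring


/-- The Abel sum. -/
noncomputable def ab1Sum (n : ℕ) (a b : ℝ) : ℝ :=
  ∑ k ∈ range (n + 1), (n.choose k : ℝ) * A a k * (b + ((n - k : ℕ) : ℝ)) ^ (n - k)

lemma deriv_sum_eq (n : ℕ) (a b : ℝ) :
    ∑ k ∈ range (n + 2), ((n + 1).choose k : ℝ) * A a k *
        ((((n + 1 - k : ℕ)) : ℝ) * (b + ((n + 1 - k : ℕ) : ℝ)) ^ (n + 1 - k - 1))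
      = (n + 1 : ℝ) * ab1Sum n a (b + 1) := by
  rw [sum_range_succ]
  have hlast : ((n + 1 - (n + 1) : ℕ) : ℝ) = 0 := by norm_num
  rw [hlast]
  rw [ab1Sum, mul_sum]
  simp only [mul_zero, zero_mul, add_zero]
  refine Finset.sum_congr rfl fun k hk => ?_
  have hk' : k ≤ n := by simpa [Nat.lt_succ_iff] using hk
  have h1 : n + 1 - k - 1 = n - k := by omega
  have h2 : ((n + 1 - k : ℕ) : ℝ) = ((n - k : ℕ) : ℝ) + 1 := by
    rw [Nat.cast_sub (by omega), Nat.cast_sub hk']; push_cast; ring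
  have h3 : (((n + 1).choose k : ℝ)) * ((n + 1 - k : ℕ) : ℝ) = (n + 1 : ℝ) * (n.choose k : ℝ) := by
    have := Nat.choose_mul_succ_eq n k
    have := congrArg (fun m : ℕ => (m : ℝ)) this
    push_cast at this
    linarith
  rw [h1, h2]
  have hbase : b + (((n - k : ℕ) : ℝ) + 1) = b + 1 + ((n - k : ℕ) : ℝ) := by ring
  rw [hbase]
  rw [h2] at h3
  linear_combination (A a k * ((b + 1 + ((n - k : ℕ) : ℝ)) ^ (n - k))) * h3

theorem ab1 (n : ℕ) (a : ℝ) : ∀ b : ℝ, ab1Sum n a b = (a + b + n) ^ n := by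
  induction n with
  | zero => intro b; simp [ab1Sum, A]
  | succ n IH =>
    intro b
    set F : ℝ → ℝ := fun b => ab1Sum (n + 1) a b with hF
    set G : ℝ → ℝ := fun b => (b + (a + ((n + 1 : ℕ) : ℝ))) ^ (n + 1) with hG
    have hFd : ∀ x : ℝ, HasDerivAt F ((n + 1 : ℝ) * ab1Sum n a (x + 1)) x := by
      intro x
      have : HasDerivAt F (∑ k ∈ range (n + 2), ((n + 1).choose k : ℝ) * A a k *
          ((((n + 1 - k : ℕ)) : ℝ) * (x + ((n + 1 - k : ℕ) : ℝ)) ^ (n + 1 - k - 1))) x := by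
        apply HasDerivAt.fun_sum
        intro k _
        have hpow : HasDerivAt (fun y : ℝ => (y + ((n + 1 - k : ℕ) : ℝ)) ^ (n + 1 - k))
            (((n + 1 - k : ℕ) : ℝ) * (x + ((n + 1 - k : ℕ) : ℝ)) ^ (n + 1 - k - 1)) x := by
          have h0 : HasDerivAt (fun y : ℝ => y + ((n + 1 - k : ℕ) : ℝ)) 1 x :=
            (hasDerivAt_id x).add_const _
          simpa using h0.fun_pow (n + 1 - k)
        simpa [mul_assoc] using hpow.const_mul (((n + 1).choose k : ℝ) * A a k)
      rwa [deriv_sum_eq] at this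
    have hGd : ∀ x : ℝ, HasDerivAt G ((n + 1 : ℝ) * ab1Sum n a (x + 1)) x := by
      intro x
      have hpow : HasDerivAt G (((n + 1 : ℕ) : ℝ) * (x + (a + ((n + 1 : ℕ) : ℝ))) ^ n) x := by
        have h0 : HasDerivAt (fun y : ℝ => y + (a + ((n + 1 : ℕ) : ℝ))) 1 x :=
          (hasDerivAt_id x).add_const _
        simpa [hG] using h0.fun_pow (n + 1)
      have : (((n + 1 : ℕ) : ℝ) * (x + (a + ((n + 1 : ℕ) : ℝ))) ^ n)
          = (n + 1 : ℝ) * ab1Sum n a (x + 1) := by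
        rw [IH (x + 1)]
        push_cast
        ring_nf
      rwa [this] at hpow
    have hconst : ∀ x y : ℝ, F x - G x = F y - G y := by
      apply is_const_of_deriv_eq_zero
      · intro x
        exact ((hFd x).sub (hGd x)).differentiableAt
      · intro x
        have := ((hFd x).sub (hGd x))
        have h2 := this.deriv
        rw [sub_self] at h2
        exact h2
    set b₀ : ℝ := -(a + ((n + 1 : ℕ) : ℝ)) with hb₀
    have hGb₀ : G b₀ = 0 := by
      simp only [hG, hb₀]
      rw [neg_add_cancel, zero_pow (by omega)]
    have hFb₀ : F b₀ = 0 := by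
      have key : ∀ k ∈ range (n + 2), ((n + 1).choose k : ℝ) * A a k *
          (b₀ + ((n + 1 - k : ℕ) : ℝ)) ^ (n + 1 - k)
          = a * ((-1 : ℝ) ^ (n + 1 - k) * ((n + 1).choose k : ℝ) * (a + k) ^ n) := by
        intro k hk
        have hk' : k ≤ n + 1 := by simpa [Nat.lt_succ_iff] using hk
        have hb : b₀ + ((n + 1 - k : ℕ) : ℝ) = -(a + k) := by
          rw [hb₀, Nat.cast_sub hk']; push_cast; ring
        rw [hb, neg_pow]
        cases k with
        | zero =>
          rw [show A a 0 = 1 from rfl]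
          norm_num
          ring
        | succ j =>
          have hA : A a (j + 1) = a * (a + ((j + 1 : ℕ) : ℝ)) ^ j := by simp [A]
          have hexp : j + (n + 1 - (j + 1)) = n := by omega
          rw [hA, show (a + ((j + 1 : ℕ) : ℝ)) ^ n
              = (a + ((j + 1 : ℕ) : ℝ)) ^ j * (a + ((j + 1 : ℕ) : ℝ)) ^ (n + 1 - (j + 1)) by
            rw [← pow_add, hexp]]
          ring
      have : F b₀ = ∑ k ∈ range (n + 2), a * ((-1 : ℝ) ^ (n + 1 - k) *
          ((n + 1).choose k : ℝ) * (a + k) ^ n) := by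
        rw [hF]
        exact Finset.sum_congr rfl key
      rw [this, ← mul_sum, alt_sum (n + 1) n (by omega) a, mul_zero]
    have := hconst b b₀
    rw [hFb₀, hGb₀] at this
    have hFG : F b = G b := by linarith
    rw [show ab1Sum (n + 1) a b = F b from rfl, hFG, hG]
    push_cast
    ring

theorem ab2 (n : ℕ) (a b : ℝ) :
    ∑ k ∈ range (n + 1), (n.choose k : ℝ) * A a k * A b (n - k) = A (a + b) n := by
  cases n with
  | zero => simp [A]
  | succ n =>
    have hsplit : ∀ k ∈ range (n + 2), ((n + 1).choose k : ℝ) * A a k * A b (n + 1 - k)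
        = ((n + 1).choose k : ℝ) * A a k * (b + ((n + 1 - k : ℕ) : ℝ)) ^ (n + 1 - k)
          - ((n + 1).choose k : ℝ) * A a k *
            (((n + 1 - k : ℕ) : ℝ) * (b + ((n + 1 - k : ℕ) : ℝ)) ^ (n + 1 - k - 1)) := by
      intro k hk
      have hk' : k ≤ n + 1 := by simpa [Nat.lt_succ_iff] using hk
      rcases Nat.eq_or_lt_of_le hk' with h | h
      · rw [← h]
        simp [A]
      · obtain ⟨j, hj⟩ : ∃ j, n + 1 - k = j + 1 := ⟨n - k, by omega⟩
        rw [hj, show j + 1 - 1 = j from rfl,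
          show A b (j + 1) = b * (b + ((j + 1 : ℕ) : ℝ)) ^ j by simp [A], pow_succ]
        push_cast
        ring
    rw [Finset.sum_congr rfl hsplit, Finset.sum_sub_distrib, deriv_sum_eq,
      show (∑ k ∈ range (n + 2), ((n + 1).choose k : ℝ) * A a k *
          (b + ((n + 1 - k : ℕ) : ℝ)) ^ (n + 1 - k)) = ab1Sum (n + 1) a b from rfl,
      ab1 (n + 1) a b, ab1 n a (b + 1),
      show A (a + b) (n + 1) = (a + b) * (a + b + ((n + 1 : ℕ) : ℝ)) ^ n by simp [A],
      show a + (b + 1) + (n : ℝ) = a + b + ((n + 1 : ℕ) : ℝ) by push_cast; ring]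
    push_cast
    ring


noncomputable def Fterm (w x : ℝ) (n : ℕ) : ℝ := (x + n) ^ n * w ^ n / n.factorial
noncomputable def Eterm (w a : ℝ) (n : ℕ) : ℝ := A a n * w ^ n / n.factorial
noncomputable def Tterm (w : ℝ) (n : ℕ) : ℝ :=
  if n = 0 then 0 else (n : ℝ) ^ (n - 1) * w ^ n / n.factorial

lemma Fterm_nonneg {w x : ℝ} (hw : 0 ≤ w) (hx : 0 ≤ x) (n : ℕ) : 0 ≤ Fterm w x n := by
  unfold Fterm; positivity
lemma Eterm_nonneg {w a : ℝ} (hw : 0 ≤ w) (ha : 0 ≤ a) (n : ℕ) : 0 ≤ Eterm w a n := by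
  unfold Eterm
  have := A_nonneg ha n
  positivity
lemma Tterm_nonneg {w : ℝ} (hw : 0 ≤ w) (n : ℕ) : 0 ≤ Tterm w n := by
  unfold Tterm
  cases n with
  | zero => simp
  | succ n => simp only [if_neg (Nat.succ_ne_zero n)]; positivity

lemma summable_F {w x : ℝ} (hw0 : 0 ≤ w) (hw1 : w * Real.exp 1 < 1) (hx : 0 ≤ x) :
    Summable (Fterm w x) := by
  rcases eq_or_lt_of_le hw0 with h0 | hpos
  · -- w = 0
    apply summable_of_ne_finset_zero (s := {0})
    intro n hn
    have hn' : n ≠ 0 := by simpa using hn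
    simp [Fterm, ← h0, zero_pow hn']
  · -- w > 0
    set r : ℝ := (w * Real.exp 1 + 1) / 2 with hr
    have hwe : 0 < w * Real.exp 1 := by positivity
    have hr1 : r < 1 := by rw [hr]; linarith
    have hrw : w * Real.exp 1 < r := by rw [hr]; linarith
    apply summable_of_ratio_norm_eventually_le hr1
    have htend : Tendsto (fun n : ℕ => 1 + x * (1 / ((n : ℝ) + 1))) atTop (nhds 1) := by
      have := tendsto_one_div_add_atTop_nhds_zero_nat (𝕜 := ℝ)
      have h2 := this.const_mul x
      have h3 := h2.const_add 1
      simpa using h3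
    have hlt : (1 : ℝ) < r / (w * Real.exp 1) := by
      rw [lt_div_iff₀ hwe]; simpa using hrw
    filter_upwards [htend.eventually_lt_const hlt, eventually_ge_atTop 1] with n hn hn1
    have hxn : (0 : ℝ) < x + n := by
      have : (1 : ℝ) ≤ (n : ℝ) := by exact_mod_cast hn1
      linarith
    have hpow : (x + (n + 1 : ℕ)) ^ n ≤ (x + n) ^ n * Real.exp 1 := by
      have h1 : x + ((n + 1 : ℕ) : ℝ) ≤ (x + n) * Real.exp (1 / (x + n)) := by
        have := Real.add_one_le_exp (1 / (x + n))
        have h2 := mul_le_mul_of_nonneg_left this (le_of_lt hxn)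
        rw [mul_add, mul_one_div, div_self (ne_of_gt hxn)] at h2
        push_cast
        linarith
      calc (x + ((n + 1 : ℕ) : ℝ)) ^ n ≤ ((x + n) * Real.exp (1 / (x + n))) ^ n := by
            apply pow_le_pow_left₀ (by push_cast; positivity) h1
        _ = (x + n) ^ n * Real.exp (1 / (x + n)) ^ n := mul_pow _ _ _
        _ = (x + n) ^ n * Real.exp ((n : ℝ) / (x + n)) := by
            rw [← Real.exp_nat_mul]; ring_nf
        _ ≤ (x + n) ^ n * Real.exp 1 := by
            apply mul_le_mul_of_nonneg_left _ (by positivity)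
            apply Real.exp_le_exp.mpr
            rw [div_le_one hxn]; linarith
    have hFn : 0 ≤ Fterm w x n := Fterm_nonneg (le_of_lt hpos) hx n
    have hFn1 : 0 ≤ Fterm w x (n + 1) := Fterm_nonneg (le_of_lt hpos) hx (n + 1)
    rw [Real.norm_eq_abs, Real.norm_eq_abs, abs_of_nonneg hFn1, abs_of_nonneg hFn]
    have hpow' : (x + (n : ℝ) + 1) ^ n ≤ (x + (n : ℝ)) ^ n * Real.exp 1 := by
      have h := hpow; push_cast at h
      rw [show x + (n:ℝ) + 1 = x + ((n:ℝ) + 1) by ring]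
      exact h
    have hxn' : (0:ℝ) ≤ x + (n:ℝ) := le_of_lt hxn
    have e1 : Fterm w x (n + 1)
        = (x + (n:ℝ) + 1) ^ n * (x + (n:ℝ) + 1) * w ^ n * w / (((n:ℝ) + 1) * n.factorial) := by
      unfold Fterm; rw [Nat.factorial_succ]; push_cast; ring
    have e2 : Fterm w x n * (w * Real.exp 1 * ((x + (n:ℝ) + 1) / ((n:ℝ) + 1)))
        = (x + (n:ℝ)) ^ n * Real.exp 1 * (x + (n:ℝ) + 1) * w ^ n * w
            / (((n:ℝ) + 1) * n.factorial) := by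
      unfold Fterm
      have hfac : (0:ℝ) < n.factorial := by exact_mod_cast n.factorial_pos
      field_simp
    have hq : (x + (n:ℝ) + 1) / ((n:ℝ) + 1) = 1 + x * (1 / ((n:ℝ) + 1)) := by
      field_simp
      ring
    have hbound : w * Real.exp 1 * ((x + (n:ℝ) + 1) / ((n:ℝ) + 1)) ≤ r := by
      rw [hq]
      calc w * Real.exp 1 * (1 + x * (1 / ((n:ℝ) + 1)))
          ≤ w * Real.exp 1 * (r / (w * Real.exp 1)) :=
            mul_le_mul_of_nonneg_left (le_of_lt hn) (le_of_lt hwe)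
        _ = r := by field_simp
    calc Fterm w x (n + 1)
        = (x + (n:ℝ) + 1) ^ n * (x + (n:ℝ) + 1) * w ^ n * w / (((n:ℝ) + 1) * n.factorial) := e1
      _ ≤ (x + (n:ℝ)) ^ n * Real.exp 1 * (x + (n:ℝ) + 1) * w ^ n * w
            / (((n:ℝ) + 1) * n.factorial) := by
          have hfac : (0:ℝ) < (n.factorial : ℝ) := by exact_mod_cast n.factorial_pos
          have hD : (0:ℝ) < ((n:ℝ) + 1) * n.factorial := by positivity
          have hnum : (x + (n:ℝ) + 1) ^ n * (x + (n:ℝ) + 1) * w ^ n * w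
              ≤ (x + (n:ℝ)) ^ n * Real.exp 1 * (x + (n:ℝ) + 1) * w ^ n * w := by
            gcongr ?_ * _ * _ * _
          exact (div_le_div_iff_of_pos_right hD).mpr hnum
      _ = Fterm w x n * (w * Real.exp 1 * ((x + (n:ℝ) + 1) / ((n:ℝ) + 1))) := e2.symm
      _ ≤ Fterm w x n * r := mul_le_mul_of_nonneg_left hbound hFn
      _ = r * Fterm w x n := mul_comm _ _
lemma A_le {a : ℝ} (ha : 0 ≤ a) (n : ℕ) : A a n ≤ (a + n) ^ n := by
  cases n with
  | zero => simp [A]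
  | succ k =>
    simp only [A, Nat.succ_ne_zero, if_false, Nat.succ_sub_one]
    calc a * (a + (k + 1 : ℕ)) ^ k ≤ (a + (k + 1 : ℕ)) * (a + (k + 1 : ℕ)) ^ k := by
          apply mul_le_mul_of_nonneg_right _ (by positivity)
          push_cast; linarith
      _ = (a + (k + 1 : ℕ)) ^ (k + 1) := by rw [pow_succ]; ring

lemma summable_E {w a : ℝ} (hw0 : 0 ≤ w) (hw1 : w * Real.exp 1 < 1) (ha : 0 ≤ a) :
    Summable (Eterm w a) := by
  apply Summable.of_nonneg_of_le (fun n => Eterm_nonneg hw0 ha n) _ (summable_F hw0 hw1 ha)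
  intro n
  unfold Eterm Fterm
  have hnf : (0:ℝ) < (n.factorial : ℝ) := by exact_mod_cast n.factorial_pos
  exact (div_le_div_iff_of_pos_right hnf).mpr (mul_le_mul_of_nonneg_right (A_le ha n) (by positivity))

lemma summable_T {w : ℝ} (hw0 : 0 ≤ w) (hw1 : w * Real.exp 1 < 1) :
    Summable (Tterm w) := by
  apply Summable.of_nonneg_of_le (fun n => Tterm_nonneg hw0 n) _ (summable_F hw0 hw1 le_rfl)
  intro n
  unfold Tterm Fterm
  cases n with
  | zero => simp
  | succ k =>
    simp only [Nat.succ_ne_zero, if_false, Nat.succ_sub_one, zero_add]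
    have hnf : (0:ℝ) < ((k+1).factorial : ℝ) := by exact_mod_cast (k+1).factorial_pos
    apply (div_le_div_iff_of_pos_right hnf).mpr
    apply mul_le_mul_of_nonneg_right _ (by positivity)
    apply pow_le_pow_right₀ (by exact_mod_cast Nat.one_le_iff_ne_zero.mpr (Nat.succ_ne_zero k))
    omega

noncomputable def Efun (w a : ℝ) : ℝ := ∑' n, Eterm w a n
noncomputable def Ffun (w x : ℝ) : ℝ := ∑' n, Fterm w x n
noncomputable def cval (w : ℝ) : ℝ := ∑' n, Tterm w n

lemma E_mul {w a b : ℝ} (hw0 : 0 ≤ w) (hw1 : w * Real.exp 1 < 1)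
    (ha : 0 ≤ a) (hb : 0 ≤ b) : Efun w a * Efun w b = Efun w (a + b) := by
  have hsa : Summable fun n => ‖Eterm w a n‖ := by
    simpa [Real.norm_eq_abs, abs_of_nonneg (Eterm_nonneg hw0 ha _)] using summable_E hw0 hw1 ha
  have hsb : Summable fun n => ‖Eterm w b n‖ := by
    simpa [Real.norm_eq_abs, abs_of_nonneg (Eterm_nonneg hw0 hb _)] using summable_E hw0 hw1 hb
  rw [Efun, Efun, Efun, tsum_mul_tsum_eq_tsum_sum_antidiagonal_of_summable_norm hsa hsb]
  congr 1
  funext n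
  rw [Finset.Nat.sum_antidiagonal_eq_sum_range_succ_mk]
  have key : ∀ k ∈ range (n + 1), Eterm w a k * Eterm w b (n - k)
      = ((n.choose k : ℝ) * A a k * A b (n - k)) * (w ^ n / n.factorial) := by
    intro k hk
    have hk' : k ≤ n := by simpa [Nat.lt_succ_iff] using hk
    unfold Eterm
    have hfac : (n.choose k : ℝ) * k.factorial * (n - k).factorial = n.factorial := by
      exact_mod_cast congrArg (fun m : ℕ => (m : ℝ)) (Nat.choose_mul_factorial_mul_factorial hk')
    have hkf : (0:ℝ) < (k.factorial : ℝ) := by exact_mod_cast k.factorial_pos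
    have hnkf : (0:ℝ) < ((n - k).factorial : ℝ) := by exact_mod_cast (n-k).factorial_pos
    have hnf : (0:ℝ) < (n.factorial : ℝ) := by exact_mod_cast n.factorial_pos
    have hw : w ^ k * w ^ (n - k) = w ^ n := by
      rw [← pow_add]; congr 1; omega
    rw [← hw, show (n.choose k : ℝ) = (n.factorial : ℝ) / (k.factorial * (n - k).factorial) by
      rw [eq_div_iff (by positivity)]; linear_combination hfac]
    field_simp
  rw [Finset.sum_congr rfl key, ← Finset.sum_mul, ab2 n a b, Eterm, mul_div_assoc]

lemma EF_mul {w a b : ℝ} (hw0 : 0 ≤ w) (hw1 : w * Real.exp 1 < 1)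
    (ha : 0 ≤ a) (hb : 0 ≤ b) : Efun w a * Ffun w b = Ffun w (a + b) := by
  have hsa : Summable fun n => ‖Eterm w a n‖ := by
    simpa [Real.norm_eq_abs, abs_of_nonneg (Eterm_nonneg hw0 ha _)] using summable_E hw0 hw1 ha
  have hsb : Summable fun n => ‖Fterm w b n‖ := by
    simpa [Real.norm_eq_abs, abs_of_nonneg (Fterm_nonneg hw0 hb _)] using summable_F hw0 hw1 hb
  rw [Efun, Ffun, Ffun, tsum_mul_tsum_eq_tsum_sum_antidiagonal_of_summable_norm hsa hsb]
  congr 1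
  funext n
  rw [Finset.Nat.sum_antidiagonal_eq_sum_range_succ_mk]
  have key : ∀ k ∈ range (n + 1), Eterm w a k * Fterm w b (n - k)
      = ((n.choose k : ℝ) * A a k * (b + ((n - k : ℕ) : ℝ)) ^ (n - k)) * (w ^ n / n.factorial) := by
    intro k hk
    have hk' : k ≤ n := by simpa [Nat.lt_succ_iff] using hk
    unfold Eterm Fterm
    have hfac : (n.choose k : ℝ) * k.factorial * (n - k).factorial = n.factorial := by
      exact_mod_cast congrArg (fun m : ℕ => (m : ℝ)) (Nat.choose_mul_factorial_mul_factorial hk')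
    have hkf : (0:ℝ) < (k.factorial : ℝ) := by exact_mod_cast k.factorial_pos
    have hnkf : (0:ℝ) < ((n - k).factorial : ℝ) := by exact_mod_cast (n-k).factorial_pos
    have hnf : (0:ℝ) < (n.factorial : ℝ) := by exact_mod_cast n.factorial_pos
    have hw : w ^ k * w ^ (n - k) = w ^ n := by
      rw [← pow_add]; congr 1; omega
    rw [← hw, show (n.choose k : ℝ) = (n.factorial : ℝ) / (k.factorial * (n - k).factorial) by
      rw [eq_div_iff (by positivity)]; linear_combination hfac]
    field_simp
  rw [Finset.sum_congr rfl key, ← Finset.sum_mul]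
  rw [show (∑ k ∈ range (n + 1), (n.choose k : ℝ) * A a k * (b + ((n - k : ℕ) : ℝ)) ^ (n - k)) = ab1Sum n a b from rfl]
  rw [ab1 n a b, Fterm, mul_div_assoc]
lemma Eterm_zero (w a : ℝ) : Eterm w a 0 = 1 := by simp [Eterm, A]

lemma E_ge_one {w a : ℝ} (hw0 : 0 ≤ w) (hw1 : w * Real.exp 1 < 1) (ha : 0 ≤ a) :
    1 ≤ Efun w a := by
  have hs := summable_E hw0 hw1 ha
  have := Summable.le_tsum hs 0 (fun j _ => Eterm_nonneg hw0 ha j)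
  rwa [Eterm_zero] at this

lemma E_pos {w a : ℝ} (hw0 : 0 ≤ w) (hw1 : w * Real.exp 1 < 1) (ha : 0 ≤ a) :
    0 < Efun w a := lt_of_lt_of_le one_pos (E_ge_one hw0 hw1 ha)

lemma A_mono {a b : ℝ} (ha : 0 ≤ a) (hab : a ≤ b) (n : ℕ) : A a n ≤ A b n := by
  cases n with
  | zero => simp [A]
  | succ k =>
    simp only [A, Nat.succ_ne_zero, if_false, Nat.succ_sub_one]
    apply mul_le_mul hab (pow_le_pow_left₀ (by positivity) (by linarith) k) (by positivity)
    linarith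

lemma E_mono {w a b : ℝ} (hw0 : 0 ≤ w) (hw1 : w * Real.exp 1 < 1)
    (ha : 0 ≤ a) (hab : a ≤ b) : Efun w a ≤ Efun w b := by
  apply (summable_E hw0 hw1 ha).tsum_le_tsum _ (summable_E hw0 hw1 (le_trans ha hab))
  intro n
  unfold Eterm
  have := A_mono ha hab n
  have h2 : (0:ℝ) ≤ w ^ n := by positivity
  have hnf : (0:ℝ) < (n.factorial : ℝ) := by exact_mod_cast n.factorial_pos
  exact (div_le_div_iff_of_pos_right hnf).mpr (mul_le_mul_of_nonneg_right this h2)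

lemma E_zero (w : ℝ) : Efun w 0 = 1 := by
  rw [Efun, tsum_eq_single 0 ?_]
  · exact Eterm_zero w 0
  · intro j hj
    obtain ⟨k, rfl⟩ := Nat.exists_eq_succ_of_ne_zero hj
    simp [Eterm, A]

lemma E_nat {w a : ℝ} (hw0 : 0 ≤ w) (hw1 : w * Real.exp 1 < 1) (ha : 0 ≤ a) :
    ∀ m : ℕ, Efun w (m * a) = Efun w a ^ m := by
  intro m
  induction m with
  | zero => simpa using E_zero w
  | succ m IH =>
    have h1 : ((m + 1 : ℕ) : ℝ) * a = (m : ℝ) * a + a := by push_cast; ring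
    rw [h1, ← E_mul hw0 hw1 (by positivity) ha, IH, pow_succ]

lemma log_E_linear {w : ℝ} (hw0 : 0 ≤ w) (hw1 : w * Real.exp 1 < 1) {a : ℝ} (ha : 0 ≤ a) :
    Real.log (Efun w a) = a * Real.log (Efun w 1) := by
  set l := Real.log (Efun w 1) with hl
  have hl0 : 0 ≤ l := Real.log_nonneg (E_ge_one hw0 hw1 zero_le_one)
  have hLnat : ∀ (m : ℕ) (x : ℝ), 0 ≤ x → Real.log (Efun w (m * x)) = m * Real.log (Efun w x) := by
    intro m x hx
    rw [E_nat hw0 hw1 hx m, Real.log_pow]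
  have hLrat : ∀ q : ℚ, 0 ≤ q → Real.log (Efun w (q : ℝ)) = (q : ℝ) * l := by
    intro q hq
    have hq0 : 0 ≤ (q : ℝ) := by exact_mod_cast hq
    have hd : (0:ℝ) < (q.den : ℕ) := by exact_mod_cast q.den_pos
    have hnum : ((q.num.toNat : ℕ) : ℝ) = (q.den : ℝ) * (q : ℝ) := by
      have hdne : ((q.den : ℕ) : ℝ) ≠ 0 := ne_of_gt hd
      have h1 : (q.num : ℝ) = (q : ℝ) * (q.den : ℝ) := by
        rw [Rat.cast_def]
        field_simp
      have h2 : (q.num.toNat : ℤ) = q.num := Int.toNat_of_nonneg (Rat.num_nonneg.mpr hq)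
      rw [show ((q.num.toNat : ℕ) : ℝ) = ((q.num.toNat : ℤ) : ℝ) by push_cast; ring, h2, h1]
      ring
    have e1 : Real.log (Efun w ((q.den : ℕ) * (q : ℝ))) = (q.den : ℝ) * Real.log (Efun w (q : ℝ)) :=
      hLnat q.den (q : ℝ) hq0
    have e2 : Real.log (Efun w ((q.num.toNat : ℕ) * 1)) = (q.num.toNat : ℝ) * l := by
      rw [hLnat q.num.toNat 1 zero_le_one]
    rw [show ((q.num.toNat : ℕ) : ℝ) * 1 = (q.den : ℝ) * (q : ℝ) by rw [hnum]; ring] at e2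
    rw [e1] at e2
    have : Real.log (Efun w (q : ℝ)) = (q.num.toNat : ℝ) / (q.den : ℝ) * l := by
      field_simp at e2 ⊢
      linarith [e2]
    rw [this, hnum]
    field_simp
  have hLmono : ∀ x y : ℝ, 0 ≤ x → x ≤ y → Real.log (Efun w x) ≤ Real.log (Efun w y) := by
    intro x y hx hxy
    exact Real.log_le_log (E_pos hw0 hw1 hx) (E_mono hw0 hw1 hx hxy)
  rcases eq_or_lt_of_le ha with h0 | hapos
  · rw [← h0, E_zero, Real.log_one]; ring
  apply le_antisymm
  · -- upper bound
    by_contra hcon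
    push_neg at hcon
    set ε := Real.log (Efun w a) - a * l with hε
    have hεpos : 0 < ε := by simp [hε]; linarith
    have hlt : a < a + ε / (l + 1) := by
      have : 0 < ε / (l + 1) := by positivity
      linarith
    obtain ⟨q, hq1, hq2⟩ := exists_rat_btwn hlt
    have hq0 : (0:ℚ) ≤ q := by
      have : (0:ℝ) < q := lt_of_le_of_lt (le_of_lt hapos) hq1
      exact_mod_cast this.le
    have h1 : Real.log (Efun w a) ≤ (q : ℝ) * l := by
      rw [← hLrat q hq0]
      exact hLmono a q ha hq1.le
    have h2 : (q : ℝ) * l ≤ (a + ε / (l + 1)) * l := by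
      apply mul_le_mul_of_nonneg_right hq2.le hl0
    have h3 : (a + ε / (l + 1)) * l < a * l + ε := by
      have : ε / (l + 1) * l < ε := by
        rw [div_mul_eq_mul_div, div_lt_iff₀ (by linarith)]
        nlinarith
      nlinarith [this]
    have hfin := lt_of_le_of_lt (h1.trans h2) h3
    linarith
  · -- lower bound
    by_contra hcon
    push_neg at hcon
    set ε := a * l - Real.log (Efun w a) with hε
    have hεpos : 0 < ε := by simp [hε]; linarith
    have hmax : max (a - ε / (l + 1)) 0 < a := by
      apply max_lt _ hapos
      have : 0 < ε / (l + 1) := by positivity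
      linarith
    obtain ⟨q, hq1, hq2⟩ := exists_rat_btwn hmax
    have hq0 : (0:ℚ) ≤ q := by
      have : (0:ℝ) ≤ q := le_of_lt (lt_of_le_of_lt (le_max_right _ _) hq1)
      exact_mod_cast this
    have h1 : (q : ℝ) * l ≤ Real.log (Efun w a) := by
      rw [← hLrat q hq0]
      exact hLmono q a (by exact_mod_cast hq0) hq2.le
    have h2 : (a - ε / (l + 1)) * l ≤ (q : ℝ) * l := by
      apply mul_le_mul_of_nonneg_right _ hl0
      exact le_of_lt (lt_of_le_of_lt (le_max_left _ _) hq1)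
    have h3 : a * l - ε < (a - ε / (l + 1)) * l := by
      have : ε / (l + 1) * l < ε := by
        rw [div_mul_eq_mul_div, div_lt_iff₀ (by linarith)]
        nlinarith
      nlinarith [this]
    have hfin := h3.trans_le (h2.trans h1)
    linarith

lemma E_exp {w : ℝ} (hw0 : 0 ≤ w) (hw1 : w * Real.exp 1 < 1) {a : ℝ} (ha : 0 ≤ a) :
    Efun w a = Real.exp (a * Real.log (Efun w 1)) := by
  rw [← log_E_linear hw0 hw1 ha, Real.exp_log (E_pos hw0 hw1 ha)]


noncomputable def Dterm (w a : ℝ) (n : ℕ) : ℝ :=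
  (a + ((n + 1 : ℕ) : ℝ)) ^ n * w ^ (n + 1) / (n + 1).factorial

noncomputable def Dfun (w a : ℝ) : ℝ := ∑' n, Dterm w a n

lemma Dterm_nonneg {w a : ℝ} (hw0 : 0 ≤ w) (ha : 0 ≤ a) (n : ℕ) : 0 ≤ Dterm w a n := by
  unfold Dterm; positivity

lemma summable_D {w a : ℝ} (hw0 : 0 ≤ w) (hw1 : w * Real.exp 1 < 1) (ha : 0 ≤ a) :
    Summable (Dterm w a) := by
  apply Summable.of_nonneg_of_le (Dterm_nonneg hw0 ha) _
    ((summable_F hw0 hw1 ha).comp_injective Nat.succ_injective)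
  intro n
  unfold Dterm
  show _ ≤ Fterm w a (n + 1)
  unfold Fterm
  have hnf : (0:ℝ) < ((n+1).factorial : ℝ) := by exact_mod_cast (n+1).factorial_pos
  apply (div_le_div_iff_of_pos_right hnf).mpr
  apply mul_le_mul_of_nonneg_right _ (by positivity)
  apply pow_le_pow_right₀ (by push_cast; linarith) (by omega)

lemma E_eq_one_add {w a : ℝ} (hw0 : 0 ≤ w) (hw1 : w * Real.exp 1 < 1) (ha : 0 ≤ a) :
    Efun w a = 1 + a * Dfun w a := by
  rw [Efun, Summable.tsum_eq_zero_add (summable_E hw0 hw1 ha), Eterm_zero]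
  congr 1
  have : ∀ n : ℕ, Eterm w a (n + 1) = a * Dterm w a n := by
    intro n
    unfold Eterm Dterm
    rw [show A a (n + 1) = a * (a + ((n + 1 : ℕ) : ℝ)) ^ n by simp [A]]
    ring
  rw [tsum_congr this, tsum_mul_left, Dfun]

lemma cval_eq_D0 {w : ℝ} (hw0 : 0 ≤ w) (hw1 : w * Real.exp 1 < 1) : cval w = Dfun w 0 := by
  rw [cval, Summable.tsum_eq_zero_add (summable_T hw0 hw1), show Tterm w 0 = 0 from rfl, zero_add, Dfun]
  apply tsum_congr
  intro n
  unfold Tterm Dterm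
  rw [if_neg (Nat.succ_ne_zero n)]
  norm_num

lemma log_E_one_eq_cval {w : ℝ} (hw0 : 0 ≤ w) (hw1 : w * Real.exp 1 < 1) :
    Real.log (Efun w 1) = cval w := by
  set l := Real.log (Efun w 1) with hl
  have h1 : Filter.Tendsto (Dfun w) (nhdsWithin 0 (Set.Ioi 0)) (nhds (Dfun w 0)) := by
    apply tendsto_tsum_of_dominated_convergence (summable_D hw0 hw1 zero_le_one)
    · intro k
      have hc : Continuous (fun a : ℝ => Dterm w a k) := by
        unfold Dterm
        fun_prop
      exact (hc.tendsto 0).mono_left nhdsWithin_le_nhds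
    · filter_upwards [Ioc_mem_nhdsGT_of_mem (Set.left_mem_Ico.mpr zero_lt_one)] with x hx k
      have hx0 : 0 < x := hx.1
      have hx1 : x ≤ 1 := hx.2
      rw [Real.norm_eq_abs, abs_of_nonneg (Dterm_nonneg hw0 hx0.le k)]
      unfold Dterm
      have hnf : (0:ℝ) < ((k+1).factorial : ℝ) := by exact_mod_cast (k+1).factorial_pos
      apply (div_le_div_iff_of_pos_right hnf).mpr
      apply mul_le_mul_of_nonneg_right _ (by positivity)
      apply pow_le_pow_left₀ (by positivity)
      linarith
  have h2 : Filter.Tendsto (Dfun w) (nhdsWithin 0 (Set.Ioi 0)) (nhds l) := by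
    have hd : HasDerivAt (fun x : ℝ => Real.exp (x * l)) l 0 := by
      have := (hasDerivAt_mul_const l (x := (0:ℝ))).exp
      simpa using this
    have h3 := hasDerivAt_iff_tendsto_slope.mp hd
    have h4 : Filter.Tendsto (slope (fun x : ℝ => Real.exp (x * l)) 0)
        (nhdsWithin 0 (Set.Ioi 0)) (nhds l) :=
      h3.mono_left (nhdsWithin_mono 0 (fun x hx => ne_of_gt hx))
    apply h4.congr'
    filter_upwards [self_mem_nhdsWithin] with x hx
    have hx0 : 0 < x := hx
    rw [slope_def_field]
    have hE : Efun w x = Real.exp (x * l) := E_exp hw0 hw1 hx0.le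
    have hE2 : Efun w x = 1 + x * Dfun w x := E_eq_one_add hw0 hw1 hx0.le
    rw [← hE, hE2]
    simp only [zero_mul, Real.exp_zero, sub_zero]
    rw [add_sub_cancel_left, mul_div_cancel_left₀ _ hx0.ne']
  exact tendsto_nhds_unique h2 (cval_eq_D0 hw0 hw1 ▸ h1)

lemma cval_nonneg {w : ℝ} (hw0 : 0 ≤ w) : 0 ≤ cval w :=
  tsum_nonneg (Tterm_nonneg hw0)

lemma E_exp_c {w : ℝ} (hw0 : 0 ≤ w) (hw1 : w * Real.exp 1 < 1) {a : ℝ} (ha : 0 ≤ a) :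
    Efun w a = Real.exp (a * cval w) := by
  rw [E_exp hw0 hw1 ha, log_E_one_eq_cval hw0 hw1]

lemma c_fixed {w : ℝ} (hw0 : 0 ≤ w) (hw1 : w * Real.exp 1 < 1) :
    cval w = w * Real.exp (cval w) := by
  have key : ∀ n : ℕ, Tterm w (n + 1) = w * Eterm w 1 n := by
    intro n
    unfold Tterm Eterm
    rw [if_neg (Nat.succ_ne_zero n)]
    cases n with
    | zero => simp [A]
    | succ j =>
      rw [show A 1 (j + 1) = 1 * ((1 : ℝ) + ((j + 1 : ℕ) : ℝ)) ^ j by simp [A]]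
      have h1 : (((j + 1) + 1 : ℕ) : ℝ) = (j : ℝ) + 2 := by push_cast; ring
      have h2 : ((j + 1 + 1).factorial : ℝ) = ((j : ℝ) + 2) * (j + 1).factorial := by
        rw [Nat.factorial_succ]; push_cast; ring
      rw [Nat.succ_sub_one, h2]
      have h3 : (((j + 1 : ℕ) + 1 : ℕ) : ℝ) ^ (j + 1) = ((j:ℝ) + 2) ^ (j + 1) := by
        push_cast; ring_nf
      have h4 : ((1 : ℝ) + ((j + 1 : ℕ) : ℝ)) ^ j = ((j:ℝ) + 2) ^ j := by
        norm_num
        rw [show (1 : ℝ) + ((j:ℝ) + 1) = (j:ℝ) + 2 by ring]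
      rw [h3, h4]
      have hjf : (0:ℝ) < ((j+1).factorial : ℝ) := by exact_mod_cast (j+1).factorial_pos
      field_simp
      ring
  have h : cval w = w * Efun w 1 := by
    rw [cval, Summable.tsum_eq_zero_add (summable_T hw0 hw1), show Tterm w 0 = 0 from rfl, zero_add,
      tsum_congr key, tsum_mul_left, ← Efun]
  calc cval w = w * Efun w 1 := h
    _ = w * Real.exp (1 * cval w) := by rw [E_exp_c hw0 hw1 zero_le_one]
    _ = w * Real.exp (cval w) := by rw [one_mul]

lemma F_eq {w : ℝ} (hw0 : 0 ≤ w) (hw1 : w * Real.exp 1 < 1) :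
    (1 - cval w) * Ffun w 0 = 1 := by
  have key : ∀ n : ℕ, Fterm w 0 (n + 1) = w * Fterm w 1 n := by
    intro n
    unfold Fterm
    have h2 : ((n + 1).factorial : ℝ) = ((n : ℝ) + 1) * n.factorial := by
      rw [Nat.factorial_succ]; push_cast; ring
    have hnf : (0:ℝ) < (n.factorial : ℝ) := by exact_mod_cast n.factorial_pos
    rw [h2]
    have h3 : ((0 : ℝ) + ((n + 1 : ℕ) : ℝ)) ^ (n + 1) = ((n:ℝ) + 1) ^ (n + 1) := by norm_num
    have h4 : ((1 : ℝ) + (n : ℝ)) ^ n = ((n:ℝ) + 1) ^ n := by rw [add_comm]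
    rw [h3, h4]
    field_simp
    ring
  have hF0 : Ffun w 0 = 1 + cval w * Ffun w 0 := by
    have e1 : Ffun w 0 = 1 + w * Ffun w 1 := by
      rw [Ffun, Summable.tsum_eq_zero_add (summable_F hw0 hw1 le_rfl),
        show Fterm w 0 0 = 1 by simp [Fterm]]
      congr 1
      rw [tsum_congr key, tsum_mul_left, Ffun]
    have e2 : Ffun w 1 = Efun w 1 * Ffun w 0 := by
      rw [EF_mul hw0 hw1 zero_le_one le_rfl, add_zero]
    have hc : w * Efun w 1 = cval w := by
      rw [E_exp_c hw0 hw1 zero_le_one, one_mul, ← c_fixed hw0 hw1]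
    calc Ffun w 0 = 1 + w * Ffun w 1 := e1
      _ = 1 + (w * Efun w 1) * Ffun w 0 := by rw [e2]; ring
      _ = 1 + cval w * Ffun w 0 := by rw [hc]
  linarith

lemma g_strictMono : StrictMonoOn (fun s : ℝ => s * Real.exp (-s)) (Set.Icc 0 1) := by
  apply strictMonoOn_of_deriv_pos (convex_Icc 0 1)
  · fun_prop
  · intro x hx
    rw [interior_Icc] at hx
    have hd : HasDerivAt (fun s : ℝ => s * Real.exp (-s))
        (1 * Real.exp (-x) + x * (Real.exp (-x) * (-1))) x := by
      exact (hasDerivAt_id x).mul ((hasDerivAt_neg x).exp)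
    rw [hd.deriv]
    have h1 : 0 < Real.exp (-x) := Real.exp_pos _
    nlinarith [hx.1, hx.2]

lemma w_exp_lt {φ : ℝ} (hφ0 : 0 ≤ φ) (hφ1 : φ < 1) : (φ * Real.exp (-φ)) * Real.exp 1 < 1 := by
  have h := Real.add_one_lt_exp (x := φ - 1) (sub_ne_zero.mpr (ne_of_lt hφ1))
  have hφe : φ < Real.exp (φ - 1) := by linarith
  calc φ * Real.exp (-φ) * Real.exp 1 = φ * Real.exp (1 - φ) := by
        rw [mul_assoc, ← Real.exp_add]; ring_nf
    _ < Real.exp (φ - 1) * Real.exp (1 - φ) :=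
        mul_lt_mul_of_pos_right hφe (Real.exp_pos _)
    _ = 1 := by rw [← Real.exp_add]; norm_num

lemma cval_zero : cval 0 = 0 := by
  rw [cval]
  convert tsum_zero with n
  unfold Tterm
  cases n with
  | zero => simp
  | succ k => simp [zero_pow (Nat.succ_ne_zero k)]

lemma cval_self {φ : ℝ} (hφ0 : 0 ≤ φ) (hφ1 : φ < 1) : cval (φ * Real.exp (-φ)) = φ := by
  set g : ℝ → ℝ := fun s => s * Real.exp (-s) with hg
  have hgmono := g_strictMono
  have hg0 : ∀ s : ℝ, 0 ≤ s → 0 ≤ g s := by intro s hs; simp only [hg]; positivity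
  have hgφpos : 0 ≤ g φ := hg0 φ hφ0
  have hmem : ∀ s, s ∈ Set.Icc (0:ℝ) φ → s ∈ Set.Icc (0:ℝ) 1 :=
    fun s hs => ⟨hs.1, le_trans hs.2 hφ1.le⟩
  have hgmono' : ∀ s ∈ Set.Icc (0:ℝ) φ, g s ≤ g φ := by
    intro s hs
    rcases eq_or_lt_of_le hs.2 with h | h
    · rw [h]
    · exact (hgmono (hmem s hs) ⟨hφ0, hφ1.le⟩ h).le
  have hgφ_lt : g φ < Real.exp (-1) := by
    have := hgmono ⟨hφ0, hφ1.le⟩ ⟨zero_le_one, le_rfl⟩ hφ1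
    simpa [hg] using this
  have hwe : ∀ s, 0 ≤ s → s < 1 → g s * Real.exp 1 < 1 := fun s h1 h2 => w_exp_lt h1 h2
  -- continuity of cval on [0, g φ]
  have hcont_c : ContinuousOn cval (Set.Icc 0 (g φ)) := by
    unfold cval
    apply continuousOn_tsum (u := fun n => Tterm (g φ) n)
    · intro n
      cases n with
      | zero => simpa [Tterm] using continuousOn_const
      | succ k =>
        simp only [Tterm, if_neg (Nat.succ_ne_zero k)]
        fun_prop
    · exact summable_T hgφpos (hwe φ hφ0 hφ1)
    · intro n x hx
      rw [Real.norm_eq_abs, abs_of_nonneg (Tterm_nonneg hx.1 n)]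
      unfold Tterm
      cases n with
      | zero => simp
      | succ k =>
        simp only [if_neg (Nat.succ_ne_zero k)]
        have hkf : (0:ℝ) < ((k+1).factorial : ℝ) := by exact_mod_cast (k+1).factorial_pos
        apply (div_le_div_iff_of_pos_right hkf).mpr
        apply mul_le_mul_of_nonneg_left _ (by positivity)
        exact pow_le_pow_left₀ hx.1 hx.2 _
  have hgcont : ContinuousOn g (Set.Icc 0 φ) := by fun_prop
  have hcont : ContinuousOn (fun s => cval (g s)) (Set.Icc 0 φ) := by
    apply hcont_c.comp hgcont
    intro s hs
    exact ⟨hg0 s hs.1, hgmono' s hs⟩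
  -- cval (g s) ≠ 1 on [0, φ]
  have hne : ∀ s ∈ Set.Icc (0:ℝ) φ, cval (g s) ≠ 1 := by
    intro s hs h1
    have hs1 : s < 1 := lt_of_le_of_lt hs.2 hφ1
    have hfix := c_fixed (hg0 s hs.1) (hwe s hs.1 hs1)
    rw [h1] at hfix
    have : g s = Real.exp (-1) := by
      rw [Real.exp_neg]
      field_simp at hfix ⊢
      linarith [hfix]
    have hlt : g s < Real.exp (-1) := lt_of_le_of_lt (hgmono' s hs) hgφ_lt
    rw [this] at hlt
    exact lt_irrefl _ hlt
  -- IVT: cval (g φ) < 1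
  have h00 : cval (g 0) = 0 := by
    have : g 0 = 0 := by simp [hg]
    rw [this, cval_zero]
  have hclt : cval (g φ) < 1 := by
    rcases lt_or_ge (cval (g φ)) 1 with h | h
    · exact h
    · exfalso
      have hsub := intermediate_value_Icc hφ0 hcont
      have h1mem : (1:ℝ) ∈ Set.Icc (cval (g 0)) (cval (g φ)) := by
        rw [h00]; exact ⟨zero_le_one, h⟩
      obtain ⟨s, hs, hseq⟩ := hsub h1mem
      exact hne s hs hseq
  -- conclude c = φ by injectivity of g on [0,1]
  have hc0 : 0 ≤ cval (g φ) := cval_nonneg hgφpos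
  have hfix := c_fixed hgφpos (hwe φ hφ0 hφ1)
  have hkey : g (cval (g φ)) = g φ := by
    simp only [hg]
    nth_rewrite 1 [hfix]
    rw [mul_assoc, ← Real.exp_add]
    simp only [hg, add_neg_cancel, Real.exp_zero, mul_one]
  exact hgmono.injOn ⟨hc0, hclt.le⟩ ⟨hφ0, hφ1.le⟩ hkey

end GP

/-- The generalized Poisson pmf `Pr(Y = y) = μ(μ + yφ)^{y−1} e^{−(μ + yφ)}/y!`. -/
noncomputable def gpPmf (μ φ : ℝ) (y : ℕ) : ℝ :=
  μ * Real.rpow (μ + (y : ℝ) * φ) ((y : ℝ) - 1) *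
    Real.exp (-(μ + (y : ℝ) * φ)) / (Nat.factorial y)

/-- The generalized Poisson distribution with `μ > 0` and `0 ≤ φ < 1` has mean
`E(Y) = μ/(1−φ)`. -/
theorem gp_mean (μ φ : ℝ) (hμ : 0 < μ) (hφ0 : 0 ≤ φ) (hφ1 : φ < 1) :
    ∑' y : ℕ, (y : ℝ) * gpPmf μ φ y = μ / (1 - φ) := by
  rcases eq_or_lt_of_le hφ0 with h0 | hφpos
  · -- φ = 0 : ordinary Poisson
    subst h0
    have key : ∀ n : ℕ, (((n + 1 : ℕ) : ℝ)) * gpPmf μ 0 (n + 1)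
        = (μ * Real.exp (-μ)) * (μ ^ n / n.factorial) := by
      intro n
      unfold gpPmf
      have hb : μ + ((n + 1 : ℕ) : ℝ) * 0 = μ := by ring
      have he : ((n + 1 : ℕ) : ℝ) - 1 = ((n : ℕ) : ℝ) := by push_cast; ring
      rw [hb, he,
        show Real.rpow μ ((n : ℕ) : ℝ) = μ ^ ((n : ℕ) : ℝ) from rfl, Real.rpow_natCast]
      have hfac : ((n + 1).factorial : ℝ) = ((n : ℝ) + 1) * n.factorial := by
        rw [Nat.factorial_succ]; push_cast; ring
      rw [hfac]
      have hnf : (0:ℝ) < (n.factorial : ℝ) := by exact_mod_cast n.factorial_pos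
      field_simp
      ring
      push_cast
      rfl
    have hsum1 : Summable (fun n : ℕ => (μ * Real.exp (-μ)) * (μ ^ n / n.factorial)) :=
      (Real.summable_pow_div_factorial μ).mul_left _
    have hsum2 : Summable (fun n : ℕ => (((n + 1 : ℕ) : ℝ)) * gpPmf μ 0 (n + 1)) :=
      hsum1.congr (fun n => (key n).symm)
    have hf : Summable (fun y : ℕ => (y : ℝ) * gpPmf μ 0 y) := by
      rw [← summable_nat_add_iff 1]
      exact hsum2
    rw [Summable.tsum_eq_zero_add hf]
    simp only [Nat.cast_zero, zero_mul, zero_add]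
    have : ∑' n : ℕ, (((n + 1 : ℕ) : ℝ)) * gpPmf μ 0 (n + 1)
        = (μ * Real.exp (-μ)) * ∑' n : ℕ, μ ^ n / n.factorial := by
      rw [tsum_congr key, tsum_mul_left]
    rw [this]
    have hexp : ∑' n : ℕ, μ ^ n / (n.factorial : ℝ) = Real.exp μ := by
      rw [Real.exp_eq_exp_ℝ, NormedSpace.exp_eq_tsum_div]
    rw [hexp, Real.exp_neg]
    field_simp
    norm_num
  · -- φ > 0
    set w : ℝ := φ * Real.exp (-φ) with hw
    set x : ℝ := (μ + φ) / φ with hx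
    have hw0 : 0 ≤ w := by rw [hw]; positivity
    have hw1 : w * Real.exp 1 < 1 := GP.w_exp_lt hφ0 hφ1
    have hx0 : 0 ≤ x := by rw [hx]; positivity
    have hc : GP.cval w = φ := GP.cval_self hφ0 hφ1
    have key : ∀ n : ℕ, (((n + 1 : ℕ) : ℝ)) * gpPmf μ φ (n + 1)
        = (μ * Real.exp (-(μ + φ))) * GP.Fterm w x n := by
      intro n
      unfold gpPmf GP.Fterm
      have he : ((n + 1 : ℕ) : ℝ) - 1 = ((n : ℕ) : ℝ) := by push_cast; ring
      have hbpos : 0 < μ + ((n + 1 : ℕ) : ℝ) * φ := by positivity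
      rw [he,
        show Real.rpow (μ + ((n + 1 : ℕ) : ℝ) * φ) ((n : ℕ) : ℝ)
          = (μ + ((n + 1 : ℕ) : ℝ) * φ) ^ ((n : ℕ) : ℝ) from rfl, Real.rpow_natCast]
      have h1 : (x + (n : ℝ)) * w = (μ + φ + (n : ℝ) * φ) * Real.exp (-φ) := by
        rw [hx, hw]
        field_simp
      have h2 : (x + (n : ℝ)) ^ n * w ^ n
          = (μ + φ + (n : ℝ) * φ) ^ n * Real.exp (-φ) ^ n := by
        rw [← mul_pow, h1, mul_pow]
      have h3 : Real.exp (-(μ + ((n + 1 : ℕ) : ℝ) * φ))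
          = Real.exp (-(μ + φ)) * Real.exp (-φ) ^ n := by
        rw [← Real.exp_nat_mul, ← Real.exp_add]
        congr 1
        push_cast
        ring
      have h4 : μ + ((n + 1 : ℕ) : ℝ) * φ = μ + φ + (n : ℝ) * φ := by push_cast; ring
      have hfac : ((n + 1).factorial : ℝ) = ((n : ℝ) + 1) * n.factorial := by
        rw [Nat.factorial_succ]; push_cast; ring
      rw [h3, h4, hfac, mul_div_assoc, h2]
      have hnf : (0:ℝ) < (n.factorial : ℝ) := by exact_mod_cast n.factorial_pos
      field_simp
      ring
      push_cast
      rfl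
    have hsum1 : Summable (fun n : ℕ => (μ * Real.exp (-(μ + φ))) * GP.Fterm w x n) :=
      (GP.summable_F hw0 hw1 hx0).mul_left _
    have hsum2 : Summable (fun n : ℕ => (((n + 1 : ℕ) : ℝ)) * gpPmf μ φ (n + 1)) :=
      hsum1.congr (fun n => (key n).symm)
    have hf : Summable (fun y : ℕ => (y : ℝ) * gpPmf μ φ y) := by
      rw [← summable_nat_add_iff 1]
      exact hsum2
    rw [Summable.tsum_eq_zero_add hf]
    simp only [Nat.cast_zero, zero_mul, zero_add]
    have e1 : ∑' n : ℕ, (((n + 1 : ℕ) : ℝ)) * gpPmf μ φ (n + 1)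
        = (μ * Real.exp (-(μ + φ))) * GP.Ffun w x := by
      rw [tsum_congr key, tsum_mul_left, GP.Ffun]
    rw [e1]
    have e2 : GP.Ffun w x = GP.Efun w x * GP.Ffun w 0 := by
      rw [GP.EF_mul hw0 hw1 hx0 le_rfl, add_zero]
    have e3 : GP.Efun w x = Real.exp (μ + φ) := by
      rw [GP.E_exp_c hw0 hw1 hx0, hc]
      congr 1
      rw [hx]
      field_simp
    have e4 : (1 - φ) * GP.Ffun w 0 = 1 := by
      have := GP.F_eq hw0 hw1
      rwa [hc] at this
    have hφne : (1:ℝ) - φ ≠ 0 := by intro h; apply absurd hφ1; linarith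
    have e5 : GP.Ffun w 0 = 1 / (1 - φ) := by
      field_simp at e4 ⊢
      linarith
    rw [e2, e3, e5, Real.exp_neg]
    have hene : Real.exp (μ + φ) ≠ 0 := Real.exp_ne_zero _
    field_simp
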